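/- Let f : S → A be a map from a set S to a partially ordered set A, and let R be a relation on S such that x R y implies f(x) ≤ f(y). Suppose R = R₀ ∪ R₁ where x R₁ y implies f(x) < f(y), and the transitive closure of R₀ is antisymmetric. Then the transitive closure of R is antisymmetric, hence a partial order when combined with reflexivity. -/
import Mathlib


/-- Abstract antisymmetry criterion: if `R = R₀ ∪ R₁` where `f` is weakly monotone
along `R`, strictly monotone along `R₁`, and the transitive closure of `R₀` is
antisymmetric, then the transitive closure of `R` is antisymmetric. -/
theorem transGen_antisymm_of_strict_decomposition
    {S A : Type*} [PartialOrder A] (f : S → A)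
    (R R₀ R₁ : S → S → Prop)
    (hunion : ∀ x y, R x y ↔ R₀ x y ∨ R₁ x y)
    (hmono : ∀ x y, R x y → f x ≤ f y)
    (hstrict : ∀ x y, R₁ x y → f x < f y)
    (hanti : ∀ x y, Relation.TransGen R₀ x y → Relation.TransGen R₀ y x → x = y) :
    ∀ x y, Relation.TransGen R x y → Relation.TransGen R y x → x = y := by
  have key : ∀ x y, Relation.TransGen R x y →
      (Relation.TransGen R₀ x y ∧ f x ≤ f y) ∨ f x < f y := by
    intro x y h
    induction h with
    | single hr =>
      rcases (hunion _ _).1 hr with h0 | h1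
      · exact Or.inl ⟨Relation.TransGen.single h0, hmono _ _ hr⟩
      · exact Or.inr (hstrict _ _ h1)
    | tail hb hr ih =>
      rcases (hunion _ _).1 hr with h0 | h1
      · rcases ih with ⟨h0', hle⟩ | hlt
        · exact Or.inl ⟨h0'.tail h0, le_trans hle (hmono _ _ hr)⟩
        · exact Or.inr (lt_of_lt_of_le hlt (hmono _ _ hr))
      · rcases ih with ⟨_, hle⟩ | hlt
        · exact Or.inr (lt_of_le_of_lt hle (hstrict _ _ h1))
        · exact Or.inr (lt_trans hlt (hstrict _ _ h1))
  intro x y hxy hyx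
  rcases key x y hxy with ⟨h1, le1⟩ | lt1
  · rcases key y x hyx with ⟨h2, _⟩ | lt2
    · exact hanti _ _ h1 h2
    · exact absurd le1 (not_le_of_gt lt2)
  · rcases key y x hyx with ⟨_, le2⟩ | lt2
    · exact absurd le2 (not_le_of_gt lt1)
    · exact absurd (lt_trans lt1 lt2) (lt_irrefl _)
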